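/- Let N, R ≤ N, κ = diag(κ',κ'') with κ', κ'' diagonal real with strictly positive entries of sizes R×R and (N−R)×(N−R). Let Q₀ be a real (N−R)×R matrix such that for every i ≤ R, j > R, either (Q₀)_{ji} = 0 or κ''_j < κ'_i, and X₀ a symmetric real R×R matrix. Define C = [[I,0],[Q₀,0]], D = [[X₀,−Q₀ᵀ],[0,I]], σ(r) = κ^{−1/2}(e^{κr}C + e^{−κr}D), and assume σ(r) is invertible for all r ≥ 0; set U(r) = σ'(r)σ(r)⁻¹ and U_∞ = diag(κ'_1,…,κ'_R,−κ''_{R+1},…,−κ''_N). Let k = diag(k₁,…,k_N) be a complex diagonal matrix such that k² + κ² = z·I for some z ∈ ℂ and such that U_∞ − ik is invertible. Then the matrix-valued function f̃(r) := (U(r) − ik) e^{ikr} (U_∞ − ik)⁻¹ satisfies the transformed Schrödinger equation f̃''(r) = (κ² − 2U'(r))f̃(r) − z f̃(r) for all r ≥ 0, and f̃(r)e^{−ikr} → I as r → ∞. -/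

import Mathlib

/-!
The free solution `σ(r) = κ^{-1/2}(e^{κr}C + e^{-κr}D)` satisfies `σ'' = κ²σ`, so its logarithmic
derivative `U = σ'σ⁻¹` solves the Riccati equation `U' = κ² - U²`. The plane wave
`G(r) = e^{ikr}M` satisfies `G' = ikG` with `(ik)² = κ² - z`, and differentiating
`f̃ = (U - ik)G` twice with the Riccati equation gives `f̃'' = (κ² - 2U')f̃ - zf̃`.

For the asymptotics write `σ(r) = κ^{-1/2}(P(r) + Q(r))e^{λr}` with `λ = diag(κ', -κ'')`,
`P = e^{κr}Ce^{-λr}` and `Q = e^{-κr}De^{-λr}`. The condition on `Q₀` makes every entry of `P`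
and `Q` constant or exponentially decaying, so `P + Q → I` and
`U = κ^{-1/2}κ(P - Q)(P + Q)⁻¹κ^{1/2} → U_∞`. Since `e^{ikr}` commutes with the diagonal
matrix `(U_∞ - ik)⁻¹`, finally `f̃(r)e^{-ikr} = (U(r) - ik)(U_∞ - ik)⁻¹ → I`.
-/

open Matrix Filter Topology

section Riccati
variable {𝔸 : Type*} [NormedRing 𝔸] [NormedAlgebra ℝ 𝔸] [HasSummableGeomSeries 𝔸]

theorem HasDerivAt.riccati {σ σ' : ℝ → 𝔸} {K : 𝔸} {r : ℝ}
    (hσ : HasDerivAt σ (σ' r) r) (hσ' : HasDerivAt σ' (K * σ r) r) (hu : IsUnit (σ r)) :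
    HasDerivAt (fun t => σ' t * Ring.inverse (σ t))
      (K - σ' r * Ring.inverse (σ r) * (σ' r * Ring.inverse (σ r))) r := by
  obtain ⟨u, hu⟩ := hu
  have hinv : HasDerivAt (fun t => Ring.inverse (σ t))
      (-(Ring.inverse (σ r) * σ' r * Ring.inverse (σ r))) r := by
    have h := (hu ▸ hasFDerivAt_ringInverse (𝕜 := ℝ) u).comp_hasDerivAt r hσ
    simpa [Function.comp_def, ← hu, Ring.inverse_unit] using h
  refine (hσ'.mul hinv).congr_deriv ?_
  rw [mul_assoc K, Ring.mul_inverse_cancel _ ⟨u, hu⟩]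
  noncomm_ring

end Riccati

section Darboux
variable {𝔸 : Type*} [NormedRing 𝔸] [NormedAlgebra ℝ 𝔸]

theorem hasDerivAt_darboux_deriv {X G : ℝ → 𝔸} {K P Z : 𝔸} {r : ℝ}
    (hX : HasDerivAt X (K - X r * X r) r) (hG : HasDerivAt G (P * G r) r)
    (hKP : Commute K P) (hP : P * P = K - Z) (hZ : ∀ a, Commute Z a) :
    HasDerivAt (fun t => (K - X t * X t) * G t + (X t - P) * (P * G t))
      ((K - 2 • (K - X r * X r)) * ((X r - P) * G r) - Z * ((X r - P) * G r)) r := by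
  refine ((((hX.mul hX).const_sub K).mul hG).add
    ((hX.sub_const P).mul (hG.const_mul P))).congr_deriv ?_
  simp only [Pi.mul_apply]
  rw [← mul_assoc P P, hP]
  have key : (K - 2 • (K - X r * X r)) * ((X r - P) * G r) - Z * ((X r - P) * G r) =
      -((K - X r * X r) * X r + X r * (K - X r * X r)) * G r + (K - X r * X r) * (P * G r) +
        ((K - X r * X r) * (P * G r) + (X r - P) * ((K - Z) * G r)) -
        (K * P - P * K) * G r - (Z * (X r - P) - (X r - P) * Z) * G r := by
    noncomm_ring
  rw [key, hKP.eq, (hZ _).eq]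
  noncomm_ring

end Darboux

-- Derivatives and limits only see the topology, which is the entrywise one for every matrix
-- norm; this choice makes square matrices a complete normed algebra.
attribute [local instance] Matrix.linftyOpNormedAddCommGroup Matrix.linftyOpNormedRing
  Matrix.linftyOpNormedAlgebra Matrix.linftyOpNormedSpace

section Entrywise
variable {m n E : Type*} [Fintype n] [NormedAddCommGroup E] [NormedSpace ℝ E]
  {M : ℝ → Matrix m n E} {M' : Matrix m n E} {r : ℝ}

theorem HasDerivAt.deriv_entrywise (h : HasDerivAt M M' r) :
    (of fun i j => _root_.deriv (fun t => M t i j) r) = M' := by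
  ext i j
  exact (hasDerivAt_pi.1 (hasDerivAt_pi.1 h i) j).deriv

theorem HasDerivWithinAt.derivWithin_entrywise {s : Set ℝ} (h : HasDerivWithinAt M M' s r)
    (hs : UniqueDiffWithinAt ℝ s r) :
    (of fun i j => _root_.derivWithin (fun t => M t i j) s r) = M' := by
  ext i j
  exact (hasDerivWithinAt_pi.1 (hasDerivWithinAt_pi.1 h i) j).derivWithin hs

theorem HasDerivAt.matrix_map_ofReal {A : ℝ → Matrix m n ℝ} {A' : Matrix m n ℝ}
    (h : HasDerivAt A A' r) :
    HasDerivAt (fun t => (A t).map ((↑) : ℝ → ℂ)) (A'.map (↑)) r :=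
  hasDerivAt_pi.2 fun i => hasDerivAt_pi.2 fun j =>
    (hasDerivAt_pi.1 (hasDerivAt_pi.1 h i) j).ofReal_comp

end Entrywise

section ExpDiag
variable {m n : Type*} [Fintype m] [Fintype n] [DecidableEq m] [DecidableEq n]

noncomputable def expDiag (κ : n → ℝ) (t : ℝ) : Matrix n n ℝ :=
  diagonal fun i => Real.exp (κ i * t)

theorem hasDerivAt_expDiag (κ : n → ℝ) (r : ℝ) :
    HasDerivAt (expDiag κ) (diagonal κ * expDiag κ r) r := by
  simp only [expDiag, diagonal_mul_diagonal]
  exact hasDerivAt_pi.2 fun i => hasDerivAt_pi.2 fun j => by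
    rcases eq_or_ne i j with rfl | hij
    · simpa [expDiag, mul_comm] using ((hasDerivAt_id r).const_mul (κ i)).exp
    · simpa [expDiag, diagonal_apply_ne _ hij] using hasDerivAt_const r (0 : ℝ)

theorem expDiag_mul_expDiag_neg (κ : n → ℝ) (t : ℝ) : expDiag κ t * expDiag (-κ) t = 1 := by
  rw [expDiag, expDiag, diagonal_mul_diagonal, ← diagonal_one]
  congr 1
  funext i
  rw [← Real.exp_add, Pi.neg_apply, neg_mul, add_neg_cancel, Real.exp_zero]

theorem tendsto_exp_mul_mul_exp {α β A L : ℝ}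
    (h : (α + β = 0 ∧ A = L) ∨ (α + β < 0 ∧ L = 0) ∨ (A = 0 ∧ L = 0)) :
    Tendsto (fun t => Real.exp (α * t) * A * Real.exp (β * t)) atTop (𝓝 L) := by
  have hfun : (fun t => Real.exp (α * t) * A * Real.exp (β * t)) =
      fun t => A * Real.exp ((α + β) * t) := by
    funext t; rw [add_mul, Real.exp_add]; ring
  rw [hfun]
  rcases h with ⟨hαβ, rfl⟩ | ⟨hαβ, rfl⟩ | ⟨rfl, rfl⟩
  · simp [hαβ]
  · simpa using (Real.tendsto_exp_atBot.comp
      (tendsto_id.const_mul_atTop_of_neg hαβ)).const_mul A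
  · simp

theorem tendsto_expDiag_mul_mul_expDiag {α : m → ℝ} {β : n → ℝ} {M L : Matrix m n ℝ}
    (h : ∀ i j, (α i + β j = 0 ∧ M i j = L i j) ∨ (α i + β j < 0 ∧ L i j = 0) ∨
      (M i j = 0 ∧ L i j = 0)) :
    Tendsto (fun t => expDiag α t * M * expDiag β t) atTop (𝓝 L) :=
  tendsto_pi_nhds.2 fun i => tendsto_pi_nhds.2 fun j => by
    simpa [expDiag, diagonal_mul, mul_diagonal] using tendsto_exp_mul_mul_exp (h i j)

end ExpDiag

section SeedSolution
variable {n : Type*} [Fintype n] [DecidableEq n] (a κ : n → ℝ) (C D : Matrix n n ℝ)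

noncomputable def seedSolution (t : ℝ) : Matrix n n ℝ :=
  diagonal a * (expDiag κ t * C + expDiag (-κ) t * D)

noncomputable def seedSolutionDeriv (t : ℝ) : Matrix n n ℝ :=
  diagonal a * (diagonal κ * (expDiag κ t * C - expDiag (-κ) t * D))

noncomputable def superpotential (t : ℝ) : Matrix n n ℝ :=
  seedSolutionDeriv a κ C D t * (seedSolution a κ C D t)⁻¹

theorem hasDerivAt_seedSolution (r : ℝ) :
    HasDerivAt (seedSolution a κ C D) (seedSolutionDeriv a κ C D r) r := by
  refine ((((hasDerivAt_expDiag κ r).mul_const C).add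
    ((hasDerivAt_expDiag (-κ) r).mul_const D)).const_mul (diagonal a)).congr_deriv ?_
  rw [seedSolutionDeriv, show diagonal (-κ) = -diagonal κ from (diagonal_neg κ).symm]
  noncomm_ring

theorem hasDerivAt_seedSolutionDeriv (r : ℝ) :
    HasDerivAt (seedSolutionDeriv a κ C D)
      (diagonal (fun i => κ i ^ 2) * seedSolution a κ C D r) r := by
  refine (((((hasDerivAt_expDiag κ r).mul_const C).sub
    ((hasDerivAt_expDiag (-κ) r).mul_const D)).const_mul (diagonal κ)).const_mul
      (diagonal a)).congr_deriv ?_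
  have hcomm : diagonal a * diagonal κ * diagonal κ = diagonal (fun i => κ i ^ 2) * diagonal a := by
    simp only [diagonal_mul_diagonal]
    congr 1; funext i; ring
  rw [seedSolution, show diagonal (-κ) = -diagonal κ from (diagonal_neg κ).symm,
    ← mul_assoc _ (diagonal a), ← hcomm]
  noncomm_ring

theorem hasDerivAt_superpotential {r : ℝ} (hσ : IsUnit (seedSolution a κ C D r)) :
    HasDerivAt (superpotential a κ C D)
      (diagonal (fun i => κ i ^ 2) - superpotential a κ C D r * superpotential a κ C D r) r := by
  unfold superpotential
  simp only [nonsing_inv_eq_ringInverse]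
  exact (hasDerivAt_seedSolution a κ C D r).riccati (hasDerivAt_seedSolutionDeriv a κ C D r) hσ

end SeedSolution

section Asymptotics
variable {n : Type*} [Fintype n] [DecidableEq n] (a κ : n → ℝ) (C D : Matrix n n ℝ)

theorem superpotential_eq (l : n → ℝ) (t : ℝ) :
    superpotential a κ C D t =
      diagonal a * diagonal κ *
        (expDiag κ t * C * expDiag (-l) t - expDiag (-κ) t * D * expDiag (-l) t) *
        (expDiag κ t * C * expDiag (-l) t + expDiag (-κ) t * D * expDiag (-l) t)⁻¹ *
        (diagonal a)⁻¹ := by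
  have hl : expDiag (-l) t * expDiag l t = 1 := by
    simpa using expDiag_mul_expDiag_neg (-l) t
  have hσ : seedSolution a κ C D t = diagonal a *
      (expDiag κ t * C * expDiag (-l) t + expDiag (-κ) t * D * expDiag (-l) t) * expDiag l t := by
    simp only [seedSolution, mul_assoc, add_mul, hl, mul_one]
  have hσ' : seedSolutionDeriv a κ C D t = diagonal a * diagonal κ *
      (expDiag κ t * C * expDiag (-l) t - expDiag (-κ) t * D * expDiag (-l) t) * expDiag l t := by
    simp only [seedSolutionDeriv, mul_assoc, sub_mul, hl, mul_one]
  rw [superpotential, hσ, hσ', Matrix.mul_inv_rev, Matrix.mul_inv_rev, inv_eq_left_inv hl]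
  simp only [mul_assoc]
  rw [← mul_assoc (expDiag l t), expDiag_mul_expDiag_neg, one_mul]

theorem tendsto_superpotential {l : n → ℝ} {P Q : Matrix n n ℝ}
    (hP : Tendsto (fun t => expDiag κ t * C * expDiag (-l) t) atTop (𝓝 P))
    (hQ : Tendsto (fun t => expDiag (-κ) t * D * expDiag (-l) t) atTop (𝓝 Q))
    (hPQ : P + Q = 1) :
    Tendsto (superpotential a κ C D) atTop
      (𝓝 (diagonal a * diagonal κ * (P - Q) * (diagonal a)⁻¹)) := by
  have hinv : ContinuousAt Inv.inv (1 : Matrix n n ℝ) :=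
    continuousAt_matrix_inv 1 (by simp)
  have h := (((tendsto_const_nhds (x := diagonal a * diagonal κ)).mul (hP.sub hQ)).mul
    (hinv.tendsto.comp (hPQ ▸ hP.add hQ))).mul (tendsto_const_nhds (x := (diagonal a)⁻¹))
  rw [inv_one, mul_one] at h
  exact h.congr fun t => (superpotential_eq a κ C D l t).symm

end Asymptotics

section Blocks
variable {ι₁ ι₂ : Type*} [Fintype ι₁] [Fintype ι₂] [DecidableEq ι₁] [DecidableEq ι₂]
  {κ' : ι₁ → ℝ} {κ'' : ι₂ → ℝ} {Q₀ : Matrix ι₂ ι₁ ℝ}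

theorem tendsto_expDiag_mul_fromBlocks_one_mul_expDiag
    (hQ₀ : ∀ i j, Q₀ j i = 0 ∨ κ'' j < κ' i) :
    Tendsto (fun t => expDiag (Sum.elim κ' κ'') t * fromBlocks 1 0 Q₀ 0 *
        expDiag (-Sum.elim κ' (-κ'')) t) atTop (𝓝 (fromBlocks 1 0 0 0)) := by
  refine tendsto_expDiag_mul_mul_expDiag ?_
  rintro (i | i) (j | j)
  · rcases eq_or_ne i j with rfl | hij
    · simp
    · simp [one_apply_ne hij]
  · simp
  · rcases hQ₀ j i with hq | hlt
    · simp [hq]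
    · simp [hlt]
  · simp

theorem tendsto_expDiag_neg_mul_fromBlocks_mul_expDiag (hκ' : ∀ i, 0 < κ' i)
    (hQ₀ : ∀ i j, Q₀ j i = 0 ∨ κ'' j < κ' i) (X₀ : Matrix ι₁ ι₁ ℝ) :
    Tendsto (fun t => expDiag (-Sum.elim κ' κ'') t * fromBlocks X₀ (-Q₀ᵀ) 0 1 *
        expDiag (-Sum.elim κ' (-κ'')) t) atTop (𝓝 (fromBlocks 0 0 0 1)) := by
  refine tendsto_expDiag_mul_mul_expDiag ?_
  rintro (i | i) (j | j)
  · refine Or.inr (Or.inl ⟨?_, rfl⟩)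
    simp only [Pi.neg_apply, Sum.elim_inl]
    linarith [hκ' i, hκ' j]
  · rcases hQ₀ i j with hq | hlt
    · simp [hq]
    · refine Or.inr (Or.inl ⟨?_, rfl⟩)
      simp only [Pi.neg_apply, Sum.elim_inl, Sum.elim_inr, neg_neg]
      linarith
  · simp
  · rcases eq_or_ne i j with rfl | hij
    · simp
    · simp [one_apply_ne hij]

theorem tendsto_superpotential_fromBlocks {a : ι₁ ⊕ ι₂ → ℝ} (ha : ∀ i, a i ≠ 0)
    (hκ' : ∀ i, 0 < κ' i) (hQ₀ : ∀ i j, Q₀ j i = 0 ∨ κ'' j < κ' i) (X₀ : Matrix ι₁ ι₁ ℝ) :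
    Tendsto (superpotential a (Sum.elim κ' κ'') (fromBlocks 1 0 Q₀ 0) (fromBlocks X₀ (-Q₀ᵀ) 0 1))
      atTop (𝓝 (diagonal (Sum.elim κ' (-κ'')))) := by
  convert tendsto_superpotential a _ _ _ (tendsto_expDiag_mul_fromBlocks_one_mul_expDiag hQ₀)
    (tendsto_expDiag_neg_mul_fromBlocks_mul_expDiag hκ' hQ₀ X₀)
    (by rw [fromBlocks_add]; simp [fromBlocks_one]) using 2
  have hPQ : fromBlocks (1 : Matrix ι₁ ι₁ ℝ) 0 0 (0 : Matrix ι₂ ι₂ ℝ) - fromBlocks 0 0 0 1 =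
      diagonal (Sum.elim 1 (-1)) := by
    ext (i | i) (j | j) <;> simp [one_apply, diagonal_apply, apply_ite]
  have ha_inv : (diagonal a)⁻¹ = diagonal fun i => (a i)⁻¹ := inv_eq_left_inv <| by
    rw [diagonal_mul_diagonal, ← diagonal_one]
    exact congrArg diagonal (funext fun i => inv_mul_cancel₀ (ha i))
  rw [hPQ, ha_inv, diagonal_mul_diagonal, diagonal_mul_diagonal, diagonal_mul_diagonal]
  congr 1
  funext i
  rcases i with i | i <;> field_simp [ha] <;> simp

section JostSolution
variable {n : Type*} [Fintype n] [DecidableEq n]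

theorem map_ofReal_diagonal_sq_sub_mul_self (κ : n → ℝ) (M : Matrix n n ℝ) :
    (diagonal (fun i => κ i ^ 2) - M * M).map ((↑) : ℝ → ℂ) =
      diagonal (fun i => (κ i : ℂ) ^ 2) - M.map (↑) * M.map (↑) := by
  ext i j
  simp [Matrix.mul_apply, diagonal_apply, apply_ite]

theorem hasDerivAt_diagonal_cexp (w : n → ℂ) (r : ℝ) :
    HasDerivAt (fun t : ℝ => diagonal fun i => Complex.exp (w i * t))
      (diagonal w * diagonal fun i => Complex.exp (w i * r)) r := by
  rw [diagonal_mul_diagonal]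
  exact hasDerivAt_pi.2 fun i => hasDerivAt_pi.2 fun j => by
    rcases eq_or_ne i j with rfl | hij
    · simpa [mul_comm] using ((Complex.ofRealCLM.hasDerivAt (x := r)).const_mul (w i)).cexp
    · simpa [diagonal_apply_ne _ hij] using hasDerivAt_const r (0 : ℂ)

theorem darboux_derivWithin_derivWithin {X G f : ℝ → Matrix n n ℂ} {K P : Matrix n n ℂ} {z : ℂ}
    (hX : ∀ t, 0 ≤ t → HasDerivAt X (K - X t * X t) t) (hG : ∀ t, HasDerivAt G (P * G t) t)
    (hf : ∀ t, f t = (X t - P) * G t) (hKP : Commute K P) (hP : P * P = K - z • 1)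
    {r : ℝ} (hr : 0 ≤ r) :
    (of fun i j => derivWithin (fun s =>
        (of fun i j => derivWithin (fun t => f t i j) (Set.Ici 0) s) i j) (Set.Ici 0) r) =
      (K - (2 : ℂ) • (K - X r * X r)) * f r - z • f r := by
  have hf' : ∀ t, 0 ≤ t → (of fun i j => derivWithin (fun t => f t i j) (Set.Ici 0) t) =
      (K - X t * X t) * G t + (X t - P) * (P * G t) := fun t ht => by
    rw [funext hf]
    exact (((hX t ht).sub_const P).mul (hG t)).hasDerivWithinAt.derivWithin_entrywise
      (uniqueDiffOn_Ici 0 t ht)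
  have hf'' := (hasDerivAt_darboux_deriv (hX r hr) (hG r) hKP hP
    fun a => (Commute.one_left a).smul_left z).hasDerivWithinAt (s := Set.Ici 0)
  rw [(hf''.congr hf' (hf' r hr)).derivWithin_entrywise (uniqueDiffOn_Ici 0 r hr), hf r,
    two_nsmul, two_smul, smul_one_mul]

theorem jost_derivWithin_derivWithin {U : ℝ → Matrix n n ℝ} {f : ℝ → Matrix n n ℂ}
    {κ : n → ℝ} {k : n → ℂ} {z : ℂ} {M : Matrix n n ℂ}
    (hU : ∀ t, 0 ≤ t → HasDerivAt U (diagonal (fun i => κ i ^ 2) - U t * U t) t)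
    (hf : ∀ s : ℝ, f s = ((U s).map (↑) - diagonal fun i => Complex.I * k i) *
      diagonal (fun i => Complex.exp (Complex.I * k i * s)) * M)
    (hk : ∀ i, k i ^ 2 + (κ i : ℂ) ^ 2 = z) {r : ℝ} (hr : 0 ≤ r) :
    (of fun i j => derivWithin (fun s =>
        (of fun i j => derivWithin (fun t => f t i j) (Set.Ici 0) s) i j) (Set.Ici 0) r) =
      (diagonal (fun i => (κ i : ℂ) ^ 2) -
        (2 : ℂ) • (diagonal (fun i => κ i ^ 2) - U r * U r).map (↑)) * f r - z • f r := by
  have hP : (diagonal fun i => Complex.I * k i) * (diagonal fun i => Complex.I * k i) =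
      diagonal (fun i => (κ i : ℂ) ^ 2) - z • 1 := by
    rw [diagonal_mul_diagonal, smul_one_eq_diagonal, diagonal_sub]
    congr 1
    funext i
    linear_combination k i ^ 2 * Complex.I_sq - hk i
  rw [map_ofReal_diagonal_sq_sub_mul_self]
  refine darboux_derivWithin_derivWithin (fun t ht => ?_) (fun t => ?_)
    (fun s => (hf s).trans (mul_assoc _ _ _)) (commute_diagonal _ _) hP hr
  · rw [← map_ofReal_diagonal_sq_sub_mul_self]
    exact (hU t ht).matrix_map_ofReal
  · exact ((hasDerivAt_diagonal_cexp _ t).mul_const M).congr_deriv (mul_assoc _ _ _)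

theorem tendsto_jost_mul_diagonal_cexp_neg {U : ℝ → Matrix n n ℝ} {l : n → ℝ} {u w : n → ℂ}
    (hU : Tendsto U atTop (𝓝 (diagonal l))) (hl : ∀ i, (l i : ℂ) = u i)
    (hu : IsUnit (diagonal u - diagonal w)) :
    Tendsto (fun r : ℝ => ((U r).map (↑) - diagonal w) *
        diagonal (fun i => Complex.exp (w i * r)) * (diagonal u - diagonal w)⁻¹ *
        diagonal fun i => Complex.exp (-(w i * r))) atTop (𝓝 1) := by
  have hcancel : ∀ r : ℝ, diagonal (fun i => Complex.exp (w i * r)) *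
      ((diagonal u - diagonal w)⁻¹ * diagonal fun i => Complex.exp (-(w i * r))) =
        (diagonal u - diagonal w)⁻¹ := fun r => by
    rw [diagonal_sub, inv_diagonal, diagonal_mul_diagonal, diagonal_mul_diagonal]
    congr 1
    funext i
    rw [mul_left_comm, ← Complex.exp_add, add_neg_cancel, Complex.exp_zero, mul_one]
  have hUc : Tendsto (fun r => (U r).map ((↑) : ℝ → ℂ)) atTop (𝓝 (diagonal u)) := by
    rw [← funext hl, ← diagonal_map Complex.ofReal_zero]
    exact ((continuous_id.matrix_map Complex.continuous_ofReal).tendsto _).comp hU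
  have h := (hUc.sub_const (diagonal w)).mul_const (diagonal u - diagonal w)⁻¹
  rw [mul_nonsing_inv _ ((isUnit_iff_isUnit_det _).mp hu)] at h
  exact h.congr fun r => by simp only [mul_assoc, hcancel]

end JostSolution

theorem prop1_jost_solution_general
    (N R : ℕ)
    (κ' : Fin R → ℝ) (κ'' : Fin (N - R) → ℝ)
    (hκ' : ∀ i, 0 < κ' i) (hκ'' : ∀ j, 0 < κ'' j)
    (Q₀ : Matrix (Fin (N - R)) (Fin R) ℝ)
    (hQ₀ : ∀ (i : Fin R) (j : Fin (N - R)), Q₀ j i = 0 ∨ κ'' j < κ' i)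
    (X₀ : Matrix (Fin R) (Fin R) ℝ)
    (k : Fin R ⊕ Fin (N - R) → ℂ) (z : ℂ)
    (hk : ∀ i, k i ^ 2 + ((Sum.elim κ' κ'' i : ℝ) : ℂ) ^ 2 = z) :
    let κv : Fin R ⊕ Fin (N - R) → ℝ := Sum.elim κ' κ''
    let C : Matrix (Fin R ⊕ Fin (N - R)) (Fin R ⊕ Fin (N - R)) ℝ :=
      fromBlocks 1 0 Q₀ 0
    let D : Matrix (Fin R ⊕ Fin (N - R)) (Fin R ⊕ Fin (N - R)) ℝ :=
      fromBlocks X₀ (-Q₀ᵀ) 0 1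
    let σ : ℝ → Matrix (Fin R ⊕ Fin (N - R)) (Fin R ⊕ Fin (N - R)) ℝ := fun s =>
      diagonal (fun i => (Real.sqrt (κv i))⁻¹) *
        (diagonal (fun i => Real.exp (κv i * s)) * C +
          diagonal (fun i => Real.exp (-(κv i) * s)) * D)
    let σd : ℝ → Matrix (Fin R ⊕ Fin (N - R)) (Fin R ⊕ Fin (N - R)) ℝ := fun s =>
      Matrix.of fun i j => deriv (fun t => σ t i j) s
    let U : ℝ → Matrix (Fin R ⊕ Fin (N - R)) (Fin R ⊕ Fin (N - R)) ℝ := fun s =>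
      σd s * (σ s)⁻¹
    let Ud : ℝ → Matrix (Fin R ⊕ Fin (N - R)) (Fin R ⊕ Fin (N - R)) ℝ := fun s =>
      Matrix.of fun i j => derivWithin (fun t => U t i j) (Set.Ici (0 : ℝ)) s
    let Uinf : Matrix (Fin R ⊕ Fin (N - R)) (Fin R ⊕ Fin (N - R)) ℂ :=
      diagonal (Sum.elim (fun i => ((κ' i : ℝ) : ℂ)) fun j => -((κ'' j : ℝ) : ℂ))
    let ik : Matrix (Fin R ⊕ Fin (N - R)) (Fin R ⊕ Fin (N - R)) ℂ :=
      diagonal fun i => Complex.I * k i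
    let ft : ℝ → Matrix (Fin R ⊕ Fin (N - R)) (Fin R ⊕ Fin (N - R)) ℂ := fun s =>
      ((U s).map (fun x => (x : ℂ)) - ik) *
        diagonal (fun i => Complex.exp (Complex.I * k i * s)) * (Uinf - ik)⁻¹
    let ftd : ℝ → Matrix (Fin R ⊕ Fin (N - R)) (Fin R ⊕ Fin (N - R)) ℂ := fun s =>
      Matrix.of fun i j => derivWithin (fun t => ft t i j) (Set.Ici (0 : ℝ)) s
    let ftdd : ℝ → Matrix (Fin R ⊕ Fin (N - R)) (Fin R ⊕ Fin (N - R)) ℂ := fun s =>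
      Matrix.of fun i j => derivWithin (fun t => ftd t i j) (Set.Ici (0 : ℝ)) s
    (∀ r : ℝ, 0 ≤ r → IsUnit (σ r)) →
    IsUnit (Uinf - ik) →
    (∀ r : ℝ, 0 ≤ r →
      ftdd r =
        (diagonal (fun i => ((κv i : ℝ) : ℂ) ^ 2) -
            (2 : ℂ) • (Ud r).map (fun x => (x : ℂ))) * ft r - z • ft r) ∧
    Tendsto
      (fun r : ℝ => ft r * diagonal fun i => Complex.exp (-(Complex.I * k i * r)))
      atTop (nhds 1) := by
  intro κv C D σ σd U Ud Uinf ik ft ftd ftdd hσ hUinf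
  have hσd : σd = seedSolutionDeriv (fun i => (Real.sqrt (κv i))⁻¹) κv C D :=
    funext fun s => (hasDerivAt_seedSolution _ κv C D s).deriv_entrywise
  have hU : ∀ r, 0 ≤ r → HasDerivAt U (diagonal (fun i => κv i ^ 2) - U r * U r) r := by
    intro r hr
    simp only [U, hσd]
    exact hasDerivAt_superpotential _ κv C D (hσ r hr)
  have hUd : ∀ r, 0 ≤ r → Ud r = diagonal (fun i => κv i ^ 2) - U r * U r := fun r hr =>
    (hU r hr).hasDerivWithinAt.derivWithin_entrywise (uniqueDiffOn_Ici 0 r hr)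
  have hUlim : Tendsto U atTop (𝓝 (diagonal (Sum.elim κ' (-κ'')))) := by
    simp only [U, hσd]
    refine tendsto_superpotential_fromBlocks (fun i => ?_) hκ' hQ₀ X₀
    have : 0 < κv i := by rcases i with i | j; exacts [hκ' i, hκ'' j]
    positivity
  refine ⟨fun r hr => ?_, ?_⟩
  · rw [hUd r hr]
    exact jost_derivWithin_derivWithin hU (fun s => rfl) hk hr
  · exact tendsto_jost_mul_diagonal_cexp_neg hUlim
      (fun i => by rcases i with i | j <;> simp) hUinf

/-- Paper's Proposition 1, formula (52): `f̃(r) = (U(r) - ik)e^{ikr}(U_∞ - ik)⁻¹`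
solves the transformed Schrödinger equation `f̃'' = (κ² - 2U')f̃ - z f̃` on `[0,∞)`
and satisfies `f̃(r)e^{-ikr} → I` as `r → ∞`; derivatives of quantities defined only
for `r ≥ 0` are taken within `[0,∞)`. -/
theorem prop1_jost_solution
    (N R : ℕ) (hN : 0 < N) (hR : R ≤ N)
    (κ' : Fin R → ℝ) (κ'' : Fin (N - R) → ℝ)
    (hκ' : ∀ i, 0 < κ' i) (hκ'' : ∀ j, 0 < κ'' j)
    (Q₀ : Matrix (Fin (N - R)) (Fin R) ℝ)
    (hQ₀ : ∀ (i : Fin R) (j : Fin (N - R)), Q₀ j i = 0 ∨ κ'' j < κ' i)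
    (X₀ : Matrix (Fin R) (Fin R) ℝ) (hX₀ : X₀.IsSymm)
    (k : Fin R ⊕ Fin (N - R) → ℂ) (z : ℂ)
    (hk : ∀ i, k i ^ 2 + ((Sum.elim κ' κ'' i : ℝ) : ℂ) ^ 2 = z) :
    let κv : Fin R ⊕ Fin (N - R) → ℝ := Sum.elim κ' κ''
    let C : Matrix (Fin R ⊕ Fin (N - R)) (Fin R ⊕ Fin (N - R)) ℝ :=
      fromBlocks 1 0 Q₀ 0
    let D : Matrix (Fin R ⊕ Fin (N - R)) (Fin R ⊕ Fin (N - R)) ℝ :=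
      fromBlocks X₀ (-Q₀ᵀ) 0 1
    let σ : ℝ → Matrix (Fin R ⊕ Fin (N - R)) (Fin R ⊕ Fin (N - R)) ℝ := fun s =>
      diagonal (fun i => (Real.sqrt (κv i))⁻¹) *
        (diagonal (fun i => Real.exp (κv i * s)) * C +
          diagonal (fun i => Real.exp (-(κv i) * s)) * D)
    let σd : ℝ → Matrix (Fin R ⊕ Fin (N - R)) (Fin R ⊕ Fin (N - R)) ℝ := fun s =>
      Matrix.of fun i j => deriv (fun t => σ t i j) s
    let U : ℝ → Matrix (Fin R ⊕ Fin (N - R)) (Fin R ⊕ Fin (N - R)) ℝ := fun s =>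
      σd s * (σ s)⁻¹
    let Ud : ℝ → Matrix (Fin R ⊕ Fin (N - R)) (Fin R ⊕ Fin (N - R)) ℝ := fun s =>
      Matrix.of fun i j => derivWithin (fun t => U t i j) (Set.Ici (0 : ℝ)) s
    let Uinf : Matrix (Fin R ⊕ Fin (N - R)) (Fin R ⊕ Fin (N - R)) ℂ :=
      diagonal (Sum.elim (fun i => ((κ' i : ℝ) : ℂ)) fun j => -((κ'' j : ℝ) : ℂ))
    let ik : Matrix (Fin R ⊕ Fin (N - R)) (Fin R ⊕ Fin (N - R)) ℂ :=
      diagonal fun i => Complex.I * k i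
    let ft : ℝ → Matrix (Fin R ⊕ Fin (N - R)) (Fin R ⊕ Fin (N - R)) ℂ := fun s =>
      ((U s).map (fun x => (x : ℂ)) - ik) *
        diagonal (fun i => Complex.exp (Complex.I * k i * s)) * (Uinf - ik)⁻¹
    let ftd : ℝ → Matrix (Fin R ⊕ Fin (N - R)) (Fin R ⊕ Fin (N - R)) ℂ := fun s =>
      Matrix.of fun i j => derivWithin (fun t => ft t i j) (Set.Ici (0 : ℝ)) s
    let ftdd : ℝ → Matrix (Fin R ⊕ Fin (N - R)) (Fin R ⊕ Fin (N - R)) ℂ := fun s =>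
      Matrix.of fun i j => derivWithin (fun t => ftd t i j) (Set.Ici (0 : ℝ)) s
    (∀ r : ℝ, 0 ≤ r → IsUnit (σ r)) →
    IsUnit (Uinf - ik) →
    (∀ r : ℝ, 0 ≤ r →
      ftdd r =
        (diagonal (fun i => ((κv i : ℝ) : ℂ) ^ 2) -
            (2 : ℂ) • (Ud r).map (fun x => (x : ℂ))) * ft r - z • ft r) ∧
    Tendsto
      (fun r : ℝ => ft r * diagonal fun i => Complex.exp (-(Complex.I * k i * r)))
      atTop (nhds 1) :=
  prop1_jost_solution_general N R κ' κ'' hκ' hκ'' Q₀ hQ₀ X₀ k z hk
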